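/- arXiv:0908.2352 — 7 statements merged into one kernel-verified Lean document; each statement's English description precedes it below -/
import Mathlib

section
/- A compact convex subset Ω of a finite-dimensional real vector space is a simplex if and only if every point of Ω has a unique representation as a convex combination of affinely independent extreme points of Ω. Equivalently: if Ω is not a simplex, then there exists a point of Ω with two distinct representations as convex combinations of extreme points. -/
/-!
In a simplex the extreme points are exactly the vertices, and barycentric coordinates with respect
to affinely independent points are unique. If Ω is not a simplex, its extreme points are affinely
dependent: otherwise they are finitely many (finite dimension), their convex hull is closed, and by
Krein–Milman it is Ω. Radon's theorem then splits the extreme points into two parts whose convex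
hulls share a point, and Carathéodory's theorem writes that point as an affinely independent convex
combination within each part; the two representations have disjoint nonempty supports.
-/

open Finset

section Ring

variable {𝕜 E : Type*} [Ring 𝕜] [AddCommGroup E] [Module 𝕜 E]

theorem AffineIndependent.finsupp_eq_of_sum_eq_sum {s : Finset E}
    (hs : AffineIndependent 𝕜 ((↑) : s → E)) {w₁ w₂ : E →₀ 𝕜} (h₁ : w₁.support ⊆ s)
    (h₂ : w₂.support ⊆ s) (hw : ∑ v ∈ w₁.support, w₁ v = ∑ v ∈ w₂.support, w₂ v)
    (hwp : ∑ v ∈ w₁.support, w₁ v • v = ∑ v ∈ w₂.support, w₂ v • v) : w₁ = w₂ := by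
  ext v
  by_cases hv : v ∈ s
  · refine hs.eq_of_sum_eq_sum_subtype ?_ ?_ v hv
    · rwa [← w₁.sum_of_support_subset h₁ (fun _ a => a) fun _ _ => rfl,
        ← w₂.sum_of_support_subset h₂ (fun _ a => a) fun _ _ => rfl]
    · rwa [← w₁.sum_of_support_subset h₁ (fun v a => a • v) fun _ _ => zero_smul 𝕜 _,
        ← w₂.sum_of_support_subset h₂ (fun v a => a • v) fun _ _ => zero_smul 𝕜 _]
  · rw [Finsupp.notMem_support_iff.mp (mt (h₁ ·) hv), Finsupp.notMem_support_iff.mp (mt (h₂ ·) hv)]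

end Ring

section Barycentric

variable {𝕜 E : Type*} [Field 𝕜] [LinearOrder 𝕜] [AddCommGroup E] [Module 𝕜 E]

variable (𝕜) in
def IsSimplex (Ω : Set E) : Prop :=
  ∃ s : Finset E, AffineIndependent 𝕜 ((↑) : s → E) ∧ Ω = convexHull 𝕜 (s : Set E)

def IsBarycentricRepr (A : Set E) (x : E) (w : E →₀ 𝕜) : Prop :=
  (∀ v, 0 ≤ w v) ∧ (↑w.support ⊆ A) ∧
    AffineIndependent 𝕜 (fun v : {v // v ∈ w.support} => (v : E)) ∧
    (∑ v ∈ w.support, w v) = 1 ∧ (∑ v ∈ w.support, w v • v) = x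

namespace IsBarycentricRepr

variable {A B : Set E} {x : E} {w : E →₀ 𝕜}

theorem mono (h : IsBarycentricRepr A x w) (hAB : A ⊆ B) : IsBarycentricRepr B x w :=
  ⟨h.1, h.2.1.trans hAB, h.2.2⟩

theorem support_nonempty (h : IsBarycentricRepr A x w) : w.support.Nonempty :=
  nonempty_of_sum_ne_zero (h.2.2.2.1 ▸ one_ne_zero)

end IsBarycentricRepr

variable [IsStrictOrderedRing 𝕜]

theorem exists_isBarycentricRepr_of_mem_convexHull {A : Set E} {x : E}
    (hx : x ∈ convexHull 𝕜 A) : ∃ w : E →₀ 𝕜, IsBarycentricRepr A x w := by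
  classical
  rw [convexHull_eq_union] at hx
  simp only [Set.mem_iUnion, exists_prop] at hx
  obtain ⟨t, htA, ht, hxt⟩ := hx
  obtain ⟨w, hw₀, hw₁, hwx⟩ := mem_convexHull'.mp hxt
  set W : E →₀ 𝕜 := Finsupp.indicator t fun v _ => w v
  have hWt : W.support ⊆ t := Finsupp.support_indicator_subset _ _
  have hW : ∀ v ∈ t, W v = w v := fun v hv => Finsupp.indicator_of_mem hv _
  refine ⟨W, fun v => ?_, (Finset.coe_subset.mpr hWt).trans htA,
    ht.mono (Finset.coe_subset.mpr hWt), ?_, ?_⟩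
  · by_cases hv : v ∈ t
    · exact (hW v hv).symm ▸ hw₀ v hv
    · simp [W, hv]
  · rw [sum_subset hWt fun v _ hv => Finsupp.notMem_support_iff.mp hv,
      sum_congr rfl hW, hw₁]
  · rw [sum_subset hWt fun v _ hv => by rw [Finsupp.notMem_support_iff.mp hv, zero_smul],
      sum_congr rfl fun v hv => by rw [hW v hv], hwx]

theorem AffineIndependent.existsUnique_isBarycentricRepr {s : Finset E}
    (hs : AffineIndependent 𝕜 ((↑) : s → E)) {x : E} (hx : x ∈ convexHull 𝕜 (s : Set E)) :
    ∃! w : E →₀ 𝕜, IsBarycentricRepr (s : Set E) x w := by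
  obtain ⟨w, hw⟩ := exists_isBarycentricRepr_of_mem_convexHull hx
  refine ⟨w, hw, fun w' hw' => hs.finsupp_eq_of_sum_eq_sum ?_ ?_ ?_ ?_⟩
  · exact_mod_cast hw'.2.1
  · exact_mod_cast hw.2.1
  · rw [hw'.2.2.2.1, hw.2.2.2.1]
  · rw [hw'.2.2.2.2, hw.2.2.2.2]

theorem AffineIndependent.mem_extremePoints_convexHull {s : Finset E}
    (hs : AffineIndependent 𝕜 ((↑) : s → E)) {a : E} (ha : a ∈ s) :
    a ∈ (convexHull 𝕜 (s : Set E)).extremePoints 𝕜 := by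
  classical
  refine ⟨subset_convexHull 𝕜 _ ha, fun x₁ hx₁ x₂ hx₂ hax => ?_⟩
  obtain ⟨u, hu₀, hu₁, hux⟩ := mem_convexHull'.mp hx₁
  obtain ⟨v, hv₀, hv₁, hvx⟩ := mem_convexHull'.mp hx₂
  obtain ⟨c₁, c₂, hc₁, hc₂, hc, hca⟩ := hax
  -- `c₁ u + c₂ v` and the Dirac weight at `a` are barycentric coordinates of the same point.
  have hcoef : ∀ b ∈ s, c₁ * u b + c₂ * v b = if b = a then 1 else 0 := by
    refine hs.eq_of_sum_eq_sum_subtype ?_ ?_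
    · simp [sum_add_distrib, ← mul_sum, hu₁, hv₁, hc, ha]
    · simp [add_smul, mul_smul, sum_add_distrib, ← smul_sum, hux, hvx, hca, ha]
  have hu : ∀ b ∈ s, b ≠ a → u b = 0 := fun b hb hba => by
    have h := hcoef b hb
    rw [if_neg hba] at h
    have := (add_eq_zero_iff_of_nonneg (mul_nonneg hc₁.le (hu₀ b hb))
      (mul_nonneg hc₂.le (hv₀ b hb))).mp h
    exact (mul_eq_zero.mp this.1).resolve_left hc₁.ne'
  have hua : u a = 1 := by rw [← hu₁, sum_eq_single a hu (absurd ha)]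
  rw [← hux, sum_eq_single a (fun b hb hba => by rw [hu b hb hba, zero_smul]) (absurd ha), hua,
    one_smul]

theorem AffineIndependent.extremePoints_convexHull {s : Finset E}
    (hs : AffineIndependent 𝕜 ((↑) : s → E)) :
    (convexHull 𝕜 (s : Set E)).extremePoints 𝕜 = s :=
  extremePoints_convexHull_subset.antisymm fun _ ha => hs.mem_extremePoints_convexHull ha

theorem exists_ne_isBarycentricRepr_of_not_affineIndependent {A : Set E}
    (h : ¬ AffineIndependent 𝕜 ((↑) : A → E)) :
    ∃ x ∈ convexHull 𝕜 A, ∃ w₁ w₂ : E →₀ 𝕜, w₁ ≠ w₂ ∧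
      IsBarycentricRepr A x w₁ ∧ IsBarycentricRepr A x w₂ := by
  obtain ⟨I, x, hxI, hxIc⟩ := Convex.radon_partition h
  obtain ⟨w₁, hw₁⟩ := exists_isBarycentricRepr_of_mem_convexHull hxI
  obtain ⟨w₂, hw₂⟩ := exists_isBarycentricRepr_of_mem_convexHull hxIc
  refine ⟨x, convexHull_mono (Subtype.coe_image_subset A I) hxI, w₁, w₂, ?_,
    hw₁.mono (Subtype.coe_image_subset A I), hw₂.mono (Subtype.coe_image_subset A Iᶜ)⟩
  rintro rfl
  obtain ⟨v, hv⟩ := hw₁.support_nonempty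
  have hdisj : Disjoint (((↑) : A → E) '' I) ((↑) '' Iᶜ) :=
    (Set.disjoint_image_iff Subtype.val_injective).mpr disjoint_compl_right
  exact Set.disjoint_left.mp hdisj (hw₁.2.1 hv) (hw₂.2.1 hv)

end Barycentric

theorem isSimplex_of_affineIndependent_extremePoints {E : Type*} [AddCommGroup E] [Module ℝ E]
    [TopologicalSpace E] [T2Space E] [IsTopologicalAddGroup E] [ContinuousSMul ℝ E]
    [LocallyConvexSpace ℝ E] [FiniteDimensional ℝ E] {Ω : Set E} (hcomp : IsCompact Ω)
    (hconv : Convex ℝ Ω) (h : AffineIndependent ℝ ((↑) : Ω.extremePoints ℝ → E)) :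
    IsSimplex ℝ Ω := by
  have hfin := finite_set_of_fin_dim_affineIndependent ℝ h
  rw [← hfin.coe_toFinset] at h
  refine ⟨hfin.toFinset, h, ?_⟩
  rw [hfin.coe_toFinset, ← (hfin.isCompact_convexHull ℝ).isClosed.closure_eq,
    closure_convexHull_extremePoints hcomp hconv]

/-- A compact convex set `Ω` in a finite-dimensional real vector space is a
simplex iff every point has a unique representation as a convex combination of affinely
independent extreme points; equivalently, if `Ω` is not a simplex then some point has two
distinct representations as convex combinations of extreme points. -/
theorem simplex_iff_unique_decomposition
    {V : Type*} [NormedAddCommGroup V] [NormedSpace ℝ V] [FiniteDimensional ℝ V]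
    (Ω : Set V) (hcomp : IsCompact Ω) (hconv : Convex ℝ Ω) :
    ((∃ s : Finset V, AffineIndependent ℝ ((↑) : s → V) ∧ Ω = convexHull ℝ (s : Set V)) ↔
      (∀ x ∈ Ω, ∃! w : V →₀ ℝ,
        (∀ v, 0 ≤ w v) ∧ (↑w.support ⊆ Set.extremePoints ℝ Ω) ∧
        AffineIndependent ℝ (fun v : {v // v ∈ w.support} => (v : V)) ∧
        (∑ v ∈ w.support, w v) = 1 ∧ (∑ v ∈ w.support, w v • v) = x)) ∧
    ((¬∃ s : Finset V, AffineIndependent ℝ ((↑) : s → V) ∧ Ω = convexHull ℝ (s : Set V)) →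
      ∃ x ∈ Ω, ∃ w₁ w₂ : V →₀ ℝ, w₁ ≠ w₂ ∧
        (∀ v, 0 ≤ w₁ v) ∧ (↑w₁.support ⊆ Set.extremePoints ℝ Ω) ∧
        (∑ v ∈ w₁.support, w₁ v) = 1 ∧ (∑ v ∈ w₁.support, w₁ v • v) = x ∧
        (∀ v, 0 ≤ w₂ v) ∧ (↑w₂.support ⊆ Set.extremePoints ℝ Ω) ∧
        (∑ v ∈ w₂.support, w₂ v) = 1 ∧ (∑ v ∈ w₂.support, w₂ v • v) = x) := by
  have two_reprs : ¬ IsSimplex ℝ Ω → ∃ x ∈ Ω, ∃ w₁ w₂ : V →₀ ℝ, w₁ ≠ w₂ ∧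
      IsBarycentricRepr (Ω.extremePoints ℝ) x w₁ ∧ IsBarycentricRepr (Ω.extremePoints ℝ) x w₂ :=
    fun hΩ => by
      obtain ⟨x, hx, h⟩ := exists_ne_isBarycentricRepr_of_not_affineIndependent
        (mt (isSimplex_of_affineIndependent_extremePoints hcomp hconv) hΩ)
      exact ⟨x, convexHull_min extremePoints_subset hconv hx, h⟩
  refine ⟨⟨?_, fun unique => ?_⟩, fun hΩ => ?_⟩
  · rintro ⟨s, hs, rfl⟩ x hx
    rw [hs.extremePoints_convexHull]
    exact hs.existsUnique_isBarycentricRepr hx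
  · by_contra hΩ
    obtain ⟨x, hx, w₁, w₂, hne, h₁, h₂⟩ := two_reprs hΩ
    exact hne ((unique x hx).unique h₁ h₂)
  · obtain ⟨x, hx, w₁, w₂, hne, ⟨hw₁, hs₁, -, hsum₁, hx₁⟩, ⟨hw₂, hs₂, -, hsum₂, hx₂⟩⟩ := two_reprs hΩ
    exact ⟨x, hx, w₁, w₂, hne, hw₁, hs₁, hsum₁, hx₁, hw₂, hs₂, hsum₂, hx₂⟩
end

section
/- Let V be a finite-dimensional real vector space and C ⊆ V a closed cone that decomposes as a direct sum C = ⊕ᵢ Cᵢ of cones Cᵢ spanning linearly independent subspaces Vᵢ. Suppose T : V → V is a linear map, positive with respect to C, such that for every extreme ray generator ω of C there is a scalar c_ω ≥ 0 with T(ω) = c_ω ω. If each Cᵢ is irreducible, then T = ∑ᵢ cᵢ Pᵢ where Pᵢ is the projection onto Vᵢ along ⊕_{j≠i} Vⱼ and the cᵢ ≥ 0 are constants. -/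
/-- A (convex) cone in a real vector space, as a set. -/
def IsConeSet {V : Type*} [AddCommGroup V] [Module ℝ V] (C : Set V) : Prop :=
  (0 : V) ∈ C ∧ (∀ x ∈ C, ∀ t : ℝ, 0 ≤ t → t • x ∈ C) ∧ ∀ x ∈ C, ∀ y ∈ C, x + y ∈ C

/-- `ω` generates an extreme ray of the cone `C`. -/
def IsExtremeRayGen {V : Type*} [AddCommGroup V] [Module ℝ V] (C : Set V) (ω : V) : Prop :=
  ω ∈ C ∧ ω ≠ 0 ∧ ∀ x ∈ C, ∀ y ∈ C, x + y = ω → ∃ t : ℝ, 0 ≤ t ∧ x = t • ω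

/-- An irreducible cone: not a nontrivial direct sum of two cones spanning
independent subspaces. -/
def IsIrreducibleCone {V : Type*} [AddCommGroup V] [Module ℝ V] (C : Set V) : Prop :=
  IsConeSet C ∧ ¬∃ D E : Set V, IsConeSet D ∧ IsConeSet E ∧ D ≠ {0} ∧ E ≠ {0} ∧
    (Submodule.span ℝ D ⊓ Submodule.span ℝ E = ⊥) ∧
    C = {x | ∃ d ∈ D, ∃ e ∈ E, x = d + e}

/-!
A closed pointed cone `K` in finite dimension lies in every closed cone containing its extreme
rays: a functional that is coercive on `K` cuts out a compact convex base, to which Krein–Milman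
applies.

Each summand `Cᵢ` is a face of `C`, so its extreme rays are extreme rays of `C` and `T` scales
them. If two extreme rays of `Cᵢ` had different eigenvalues, projecting along the eigenspace of
one of them and a complement containing all other eigenspaces would split `Cᵢ` into a direct
sum of two nonzero cones, contradicting irreducibility. Hence all extreme rays of `Cᵢ` lie in a
single eigenspace, and this closed cone then contains `Cᵢ` and its span.
-/

section Algebraic

variable {V : Type*} [AddCommGroup V] [Module ℝ V]

theorem IsConeSet.convex {K : Set V} (hK : IsConeSet K) : Convex ℝ K :=
  fun x hx y hy a b ha hb _ => hK.2.2 _ (hK.2.1 x hx a ha) _ (hK.2.1 y hy b hb)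

theorem IsConeSet.inter {K L : Set V} (hK : IsConeSet K) (hL : IsConeSet L) :
    IsConeSet (K ∩ L) :=
  ⟨⟨hK.1, hL.1⟩, fun x hx t ht => ⟨hK.2.1 x hx.1 t ht, hL.2.1 x hx.2 t ht⟩,
    fun x hx y hy => ⟨hK.2.2 x hx.1 y hy.1, hL.2.2 x hx.2 y hy.2⟩⟩

theorem IsConeSet.preimage {E : Type*} [AddCommGroup E] [Module ℝ E] {K : Set V}
    (hK : IsConeSet K) (f : E →ₗ[ℝ] V) :
    IsConeSet (f ⁻¹' K) :=
  ⟨by simpa using hK.1, fun _ hx t ht => by simpa using hK.2.1 _ hx t ht,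
    fun _ hx _ hy => by simpa using hK.2.2 _ hx _ hy⟩

theorem Submodule.isConeSet (U : Submodule ℝ V) : IsConeSet (U : Set V) :=
  ⟨U.zero_mem, fun _ hx t _ => U.smul_mem t hx, fun _ hx _ hy => U.add_mem hx hy⟩

theorem IsConeSet.isExtremeRayGen_of_mem_extremePoints {K : Set V} (hK : IsConeSet K)
    {f : V →ₗ[ℝ] ℝ} (hf : ∀ y ∈ K, y ≠ 0 → 0 < f y) {ω : V}
    (hω : ω ∈ (K ∩ f ⁻¹' {1}).extremePoints ℝ) : IsExtremeRayGen K ω := by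
  obtain ⟨⟨hωK, hωf⟩, hext⟩ := hω
  refine ⟨hωK, fun h => by simp [h] at hωf, fun x hx y hy hxy => ?_⟩
  rcases eq_or_ne x 0 with rfl | hx0
  · exact ⟨0, le_rfl, (zero_smul ℝ ω).symm⟩
  rcases eq_or_ne y 0 with rfl | hy0
  · exact ⟨1, zero_le_one, by rw [one_smul, ← hxy, add_zero]⟩
  have hfx := hf x hx hx0
  have hfy := hf y hy hy0
  have normalize : ∀ z ∈ K, 0 < f z → (f z)⁻¹ • z ∈ K ∩ f ⁻¹' {1} := fun z hz hfz =>
    ⟨hK.2.1 z hz _ (inv_nonneg.2 hfz.le), by simp [inv_mul_cancel₀ hfz.ne']⟩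
  have hseg : ω ∈ openSegment ℝ ((f x)⁻¹ • x) ((f y)⁻¹ • y) := by
    refine ⟨f x, f y, hfx, hfy, by rw [← map_add, hxy]; exact hωf, ?_⟩
    rw [smul_smul, smul_smul, mul_inv_cancel₀ hfx.ne', mul_inv_cancel₀ hfy.ne', one_smul,
      one_smul, hxy]
  refine ⟨f x, hfx.le, ?_⟩
  rw [← hext (normalize x hx hfx) (normalize y hy hfy) hseg, smul_smul,
    mul_inv_cancel₀ hfx.ne', one_smul]

section DirectSum

variable {ι : Type*} [Fintype ι] {C : Set V} {Cs : ι → Set V}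
  (hpt : ∀ x ∈ C, -x ∈ C → x = 0) (hsub : ∀ i, Cs i ⊆ C)
  (hindep : iSupIndep fun i => Submodule.span ℝ (Cs i))
  (hdecomp : ∀ x ∈ C, ∃ y : ι → V, (∀ i, y i ∈ Cs i) ∧ x = ∑ i, y i)
include hpt hsub hindep hdecomp

/-- Comparing the components of `x + y` along the independent spans, the components of `x`
outside `Vᵢ` cancel against those of `y`, hence vanish by pointedness. -/
theorem mem_summand_of_add_mem_span {i : ι} {x y : V} (hx : x ∈ C) (hy : y ∈ C)
    (hxy : x + y ∈ Submodule.span ℝ (Cs i)) : x ∈ Cs i := by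
  classical
  obtain ⟨xs, hxs, rfl⟩ := hdecomp x hx
  obtain ⟨ys, hys, rfl⟩ := hdecomp y hy
  have hcomp : ∀ j, xs j + ys j = (Pi.single i (∑ k, xs k + ∑ k, ys k) : ι → V) j := by
    refine fun j => (iSupIndep_iff_finsetSum_eq_imp_eq _).1 hindep Finset.univ _ _
      (fun j _ => ⟨add_mem (Submodule.subset_span (hxs j)) (Submodule.subset_span (hys j)), ?_⟩)
      (by simp [Finset.sum_add_distrib]) j (Finset.mem_univ j)
    rcases eq_or_ne j i with rfl | hji
    · simpa using hxy
    · simp [hji]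
  have hxs0 : ∀ j ≠ i, xs j = 0 := fun j hji =>
    hpt _ (hsub j (hxs j)) <| by
      rw [neg_eq_of_add_eq_zero_right (by simpa [hji] using hcomp j)]
      exact hsub j (hys j)
  rw [Finset.sum_eq_single i (fun j _ => hxs0 j) (by simp)]
  exact hxs i

theorem isExtremeRayGen_of_summand {i : ι} {ω : V} (hω : IsExtremeRayGen (Cs i) ω) :
    IsExtremeRayGen C ω := by
  refine ⟨hsub i hω.1, hω.2.1, fun x hx y hy hxy => hω.2.2 x ?_ y ?_ hxy⟩
  · exact mem_summand_of_add_mem_span hpt hsub hindep hdecomp hx hy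
      (hxy ▸ Submodule.subset_span hω.1)
  · exact mem_summand_of_add_mem_span hpt hsub hindep hdecomp hy hx
      (add_comm x y ▸ hxy ▸ Submodule.subset_span hω.1)

theorem summand_eq_inter_span (i : ι) : Cs i = C ∩ Submodule.span ℝ (Cs i) :=
  Set.Subset.antisymm (fun _ hx => ⟨hsub i hx, Submodule.subset_span hx⟩) fun _ hx =>
    mem_summand_of_add_mem_span hpt hsub hindep hdecomp hx.1 hx.1 (add_mem hx.2 hx.2)

end DirectSum

end Algebraic

section Topological

open Module.End

variable {V : Type*} [NormedAddCommGroup V] [NormedSpace ℝ V]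

theorem IsConeSet.exists_nonneg_functional_pos {K : Set V} (hK : IsConeSet K)
    (hcl : IsClosed K) {y : V} (hy : -y ∉ K) :
    ∃ f : StrongDual ℝ V, (∀ z ∈ K, 0 ≤ f z) ∧ 0 < f y := by
  obtain ⟨f, u, hfy, hfK⟩ := geometric_hahn_banach_point_closed hK.convex hcl hy
  have hu : u < 0 := by simpa using hfK 0 hK.1
  refine ⟨f, fun z hz => ?_, by simpa using hfy.trans hu⟩
  by_contra! hfz
  have := hfK _ (hK.2.1 z hz (u / f z) (div_nonneg_of_nonpos hu.le hfz.le))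
  rw [map_smul, smul_eq_mul, div_mul_cancel₀ _ hfz.ne] at this
  exact this.false

variable [FiniteDimensional ℝ V]

/-- Separate each unit vector of the cone from the cone, and sum finitely many of these
functionals by compactness of the unit sphere. -/
theorem IsConeSet.exists_functional_coercive {K : Set V} (hK : IsConeSet K) (hcl : IsClosed K)
    (hpt : ∀ x ∈ K, -x ∈ K → x = 0) :
    ∃ (f : StrongDual ℝ V) (u : ℝ), 0 < u ∧ ∀ y ∈ K, u * ‖y‖ ≤ f y := by
  classical
  set S := K ∩ Metric.sphere (0 : V) 1
  have hS : IsCompact S := (isCompact_sphere 0 1).inter_left hcl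
  have hsep : ∀ y : S, ∃ f : StrongDual ℝ V, (∀ z ∈ K, 0 ≤ f z) ∧ 0 < f y := fun y =>
    hK.exists_nonneg_functional_pos hcl fun hny =>
      Metric.ne_of_mem_sphere y.2.2 one_ne_zero (hpt y y.2.1 hny)
  choose f hfK hfy using hsep
  obtain ⟨t, ht⟩ := hS.elim_finite_subcover (fun y : S => {z | 0 < f y z})
    (fun y => isOpen_lt continuous_const (f y).continuous)
    (fun y hy => Set.mem_iUnion.2 ⟨⟨y, hy⟩, hfy ⟨y, hy⟩⟩)
  set g := ∑ y ∈ t, f y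
  have hgS : ∀ z ∈ S, 0 < g z := fun z hz => by
    obtain ⟨y, hyt, hzy⟩ := Set.mem_iUnion₂.1 (ht hz)
    simpa [g] using Finset.sum_pos' (fun y _ => hfK y z hz.1) ⟨y, hyt, hzy⟩
  obtain ⟨u, hu, hgu⟩ := hS.exists_forall_le' g.continuous.continuousOn hgS
  refine ⟨g, u, hu, fun y hy => ?_⟩
  rcases eq_or_ne y 0 with rfl | hy0
  · simp
  have hnorm : ‖y‖ ≠ 0 := norm_ne_zero_iff.2 hy0
  have hyS : ‖y‖⁻¹ • y ∈ S :=
    ⟨hK.2.1 y hy _ (inv_nonneg.2 (norm_nonneg y)), by simp [norm_smul, hnorm]⟩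
  calc u * ‖y‖ ≤ g (‖y‖⁻¹ • y) * ‖y‖ := by gcongr; exact hgu _ hyS
    _ = g y := by rw [map_smul, smul_eq_mul, mul_comm, ← mul_assoc, mul_inv_cancel₀ hnorm, one_mul]

/-- Krein–Milman applied to the compact convex base `K ∩ {f = 1}` cut out by a coercive
functional `f`. -/
theorem IsConeSet.subset_of_isExtremeRayGen_mem {K P : Set V} (hK : IsConeSet K)
    (hcl : IsClosed K) (hpt : ∀ x ∈ K, -x ∈ K → x = 0) (hP : IsConeSet P) (hPcl : IsClosed P)
    (hext : ∀ ω, IsExtremeRayGen K ω → ω ∈ P) : K ⊆ P := by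
  obtain ⟨f, u, hu, hf⟩ := hK.exists_functional_coercive hcl hpt
  have hfpos : ∀ y ∈ K, y ≠ 0 → 0 < f y := fun y hy hy0 =>
    (mul_pos hu (norm_pos_iff.2 hy0)).trans_le (hf y hy)
  set B := K ∩ f ⁻¹' {1}
  have hBcpt : IsCompact B := by
    refine Metric.isCompact_of_isClosed_isBounded
      (hcl.inter (isClosed_singleton.preimage f.continuous))
      ((Metric.isBounded_closedBall (x := (0 : V)) (r := u⁻¹)).subset fun y hy => ?_)
    rw [Metric.mem_closedBall, dist_zero_right, ← one_div, le_div_iff₀ hu, mul_comm]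
    exact (hf y hy.1).trans_eq hy.2
  have hBconv : Convex ℝ B := hK.convex.inter ((convex_singleton 1).linear_preimage f.toLinearMap)
  have hBP : B ⊆ P := by
    rw [← closure_convexHull_extremePoints hBcpt hBconv]
    exact closure_minimal (convexHull_min (fun ω hω =>
      hext ω (hK.isExtremeRayGen_of_mem_extremePoints (f := f.toLinearMap) hfpos hω))
      hP.convex) hPcl
  intro x hx
  rcases eq_or_ne x 0 with rfl | hx0
  · exact hP.1
  have hfx := hfpos x hx hx0
  have hxB : (f x)⁻¹ • x ∈ B :=
    ⟨hK.2.1 x hx _ (inv_nonneg.2 hfx.le), by simp [inv_mul_cancel₀ hfx.ne']⟩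
  simpa [smul_smul, mul_inv_cancel₀ hfx.ne'] using hP.2.1 _ (hBP hxB) (f x) hfx.le

/-- If some extreme ray lay in `W` only, the projections along `U ⊕ W` would write `K` as the
direct sum of `K ∩ U` and `K ∩ W`, since the cone `{x | π_U x ∈ K ∧ π_W x ∈ K}` is closed and
contains every extreme ray. -/
theorem IsIrreducibleCone.isExtremeRayGen_mem_of_isCompl {K : Set V} (hK : IsIrreducibleCone K)
    (hcl : IsClosed K) (hpt : ∀ x ∈ K, -x ∈ K → x = 0) {U W : Submodule ℝ V}
    (hUW : IsCompl U W) (hsplit : ∀ ω, IsExtremeRayGen K ω → ω ∈ U ∨ ω ∈ W) {ω₀ : V}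
    (hω₀ : IsExtremeRayGen K ω₀) (hω₀U : ω₀ ∈ U) {ω : V} (hω : IsExtremeRayGen K ω) :
    ω ∈ U := by
  by_contra hωU
  have hωW := (hsplit ω hω).resolve_left hωU
  set π := U.projection W hUW
  set ρ := W.projection U hUW.symm
  have hKQ : K ⊆ π ⁻¹' K ∩ ρ ⁻¹' K := by
    refine hK.1.subset_of_isExtremeRayGen_mem hcl hpt ((hK.1.preimage π).inter (hK.1.preimage ρ))
      ((hcl.preimage π.continuous_of_finiteDimensional).inter
        (hcl.preimage ρ.continuous_of_finiteDimensional)) fun ν hν => ?_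
    rcases hsplit ν hν with hνU | hνW
    · simpa [π, ρ, Submodule.projection_apply_of_mem_left _ hνU,
        Submodule.projection_apply_of_mem_right _ hνU] using ⟨hν.1, hK.1.1⟩
    · simpa [π, ρ, Submodule.projection_apply_of_mem_left _ hνW,
        Submodule.projection_apply_of_mem_right _ hνW] using ⟨hK.1.1, hν.1⟩
  refine hK.2 ⟨K ∩ U, K ∩ W, hK.1.inter U.isConeSet, hK.1.inter W.isConeSet,
    fun h => hω₀.2.1 (by rw [← Set.mem_singleton_iff, ← h]; exact ⟨hω₀.1, hω₀U⟩),
    fun h => hω.2.1 (by rw [← Set.mem_singleton_iff, ← h]; exact ⟨hω.1, hωW⟩),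
    eq_bot_iff.2 ((inf_le_inf (Submodule.span_le.2 Set.inter_subset_right)
      (Submodule.span_le.2 Set.inter_subset_right)).trans hUW.inf_eq_bot.le), ?_⟩
  ext x
  refine ⟨fun hx => ⟨π x, ⟨(hKQ hx).1, by simp [π]⟩, ρ x, ⟨(hKQ hx).2, by simp [ρ]⟩,
    (Submodule.projection_add_projection_eq_self hUW x).symm⟩, ?_⟩
  rintro ⟨d, hd, e, he, rfl⟩
  exact hK.1.2.2 d hd.1 e he.1

theorem IsIrreducibleCone.exists_nonneg_forall_isExtremeRayGen_apply_eq_smul {K : Set V}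
    (hK : IsIrreducibleCone K) (hcl : IsClosed K) (hpt : ∀ x ∈ K, -x ∈ K → x = 0)
    (T : V →ₗ[ℝ] V) (hT : ∀ ω, IsExtremeRayGen K ω → ∃ c : ℝ, 0 ≤ c ∧ T ω = c • ω) :
    ∃ c : ℝ, 0 ≤ c ∧ ∀ ω, IsExtremeRayGen K ω → T ω = c • ω := by
  by_cases hext : ∃ ω, IsExtremeRayGen K ω
  swap
  · exact ⟨0, le_rfl, fun ω hω => (hext ⟨ω, hω⟩).elim⟩
  obtain ⟨ω₀, hω₀⟩ := hext
  obtain ⟨c, hc, hTω₀⟩ := hT ω₀ hω₀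
  obtain ⟨W, hW, hWU⟩ := (eigenspaces_iSupIndep T c).symm.exists_isCompl
  have hsplit : ∀ ω, IsExtremeRayGen K ω → ω ∈ eigenspace T c ∨ ω ∈ W := by
    intro ω hω
    obtain ⟨μ, -, hTω⟩ := hT ω hω
    rcases eq_or_ne μ c with rfl | hμc
    · exact Or.inl (mem_eigenspace_iff.2 hTω)
    · exact Or.inr (hW ((le_iSup₂ (f := fun μ (_ : μ ≠ c) => eigenspace T μ) μ hμc)
        (mem_eigenspace_iff.2 hTω)))
  exact ⟨c, hc, fun ω hω => mem_eigenspace_iff.1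
    (hK.isExtremeRayGen_mem_of_isCompl hcl hpt hWU.symm hsplit hω₀
      (mem_eigenspace_iff.2 hTω₀) hω)⟩

theorem IsIrreducibleCone.exists_nonneg_forall_mem_span_apply_eq_smul {K : Set V}
    (hK : IsIrreducibleCone K) (hcl : IsClosed K) (hpt : ∀ x ∈ K, -x ∈ K → x = 0)
    (T : V →ₗ[ℝ] V) (hT : ∀ ω, IsExtremeRayGen K ω → ∃ c : ℝ, 0 ≤ c ∧ T ω = c • ω) :
    ∃ c : ℝ, 0 ≤ c ∧ ∀ x ∈ Submodule.span ℝ K, T x = c • x := by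
  obtain ⟨c, hc, hTc⟩ := hK.exists_nonneg_forall_isExtremeRayGen_apply_eq_smul hcl hpt T hT
  have hKc : K ⊆ eigenspace T c :=
    hK.1.subset_of_isExtremeRayGen_mem hcl hpt (eigenspace T c).isConeSet
      (Submodule.closed_of_finiteDimensional _) fun ω hω =>
        mem_eigenspace_iff.2 (hTc ω hω)
  exact ⟨c, hc, fun x hx => mem_eigenspace_iff.1 (Submodule.span_le.2 hKc hx)⟩

end Topological

theorem nondisturbing_maps_are_sums_of_scaled_projections_general
    {V : Type*} [NormedAddCommGroup V] [NormedSpace ℝ V] [FiniteDimensional ℝ V]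
    {n : ℕ} (C : Set V) (Cs : Fin n → Set V)
    (hclosed : IsClosed C)
    (hpointed : ∀ x ∈ C, -x ∈ C → x = 0)
    (hsub : ∀ i, Cs i ⊆ C)
    (hindep : iSupIndep fun i => Submodule.span ℝ (Cs i))
    (hdecomp : ∀ x ∈ C, ∃ y : Fin n → V, (∀ i, y i ∈ Cs i) ∧ x = ∑ i, y i)
    (hirr : ∀ i, IsIrreducibleCone (Cs i))
    (T : V →ₗ[ℝ] V)
    (hT : ∀ ω, IsExtremeRayGen C ω → ∃ c : ℝ, 0 ≤ c ∧ T ω = c • ω) :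
    ∃ c : Fin n → ℝ, (∀ i, 0 ≤ c i) ∧
      ∀ i, ∀ x ∈ Submodule.span ℝ (Cs i), T x = c i • x := by
  have hclosed_summand : ∀ i, IsClosed (Cs i) := fun i => by
    rw [summand_eq_inter_span hpointed hsub hindep hdecomp i]
    exact hclosed.inter (Submodule.closed_of_finiteDimensional _)
  choose c hc0 hc using fun i => (hirr i).exists_nonneg_forall_mem_span_apply_eq_smul
    (hclosed_summand i) (fun x hx hnx => hpointed x (hsub i hx) (hsub i hnx)) T
    fun ω hω => hT ω (isExtremeRayGen_of_summand hpointed hsub hindep hdecomp hω)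
  exact ⟨c, hc0, hc⟩

/-- If a closed pointed cone `C` is the direct sum of irreducible cones `Cs i`
spanning independent subspaces `Vᵢ`, and the positive linear map `T` scales every extreme
ray generator of `C`, then `T` acts on each summand `Vᵢ` as a nonnegative scalar `cᵢ`
(i.e. `T = ∑ᵢ cᵢ Pᵢ` for the projections `Pᵢ` onto the `Vᵢ`). -/
theorem nondisturbing_maps_are_sums_of_scaled_projections
    {V : Type*} [NormedAddCommGroup V] [NormedSpace ℝ V] [FiniteDimensional ℝ V]
    {n : ℕ} (C : Set V) (Cs : Fin n → Set V)
    (hC : IsConeSet C) (hclosed : IsClosed C)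
    (hpointed : ∀ x ∈ C, -x ∈ C → x = 0)
    (hCs : ∀ i, IsConeSet (Cs i))
    (hsub : ∀ i, Cs i ⊆ C)
    (hindep : iSupIndep fun i => Submodule.span ℝ (Cs i))
    (hspan : (⨆ i, Submodule.span ℝ (Cs i)) = ⊤)
    (hdecomp : ∀ x ∈ C, ∃ y : Fin n → V, (∀ i, y i ∈ Cs i) ∧ x = ∑ i, y i)
    (hirr : ∀ i, IsIrreducibleCone (Cs i))
    (T : V →ₗ[ℝ] V) (hTpos : ∀ x ∈ C, T x ∈ C)
    (hT : ∀ ω, IsExtremeRayGen C ω → ∃ c : ℝ, 0 ≤ c ∧ T ω = c • ω) :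
    ∃ c : Fin n → ℝ, (∀ i, 0 ≤ c i) ∧
      ∀ i, ∀ x ∈ Submodule.span ℝ (Cs i), T x = c i • x :=
  nondisturbing_maps_are_sums_of_scaled_projections_general C Cs hclosed hpointed hsub hindep
    hdecomp hirr T hT
end

section
/- In finite-dimensional quantum theory (A = Hermitian operators on ℂ² with the trace order unit), the maximal tensor product of A with itself strictly contains the minimal tensor product: there exists a linear functional on A* ⊗ A* that is positive on products of positive functionals, is normalized, but is not a convex combination of product states. (E.g., the swap-based or PPT-violating forms.) -/
/-!
The witness is the swap operator `F/2`, read as the form `ω(a, b) = Tr(ρ_a ρ_b) / 2` on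
`A* × A*`, where `ρ_a` is the density matrix of `a`, i.e. `a x = Re Tr(ρ_a x)`. A positive
functional has a positive semidefinite density (test it on `z z*`), so `ω(a, b) = b(ρ_a) / 2 ≥ 0`
on positive pairs.

For the Bloch coordinates `c_k = Tr(σ_k ·) / 2`, `k = 1, 2, 3`, one gets `Σ_k ω(c_k, c_k) = 3/4`.
On a state `x` we have `c_0 x = 1/2` and `det x = c_0² - Σ_k c_k² ≥ 0`, so the Bloch vectors of
states lie in the ball of radius `1/2` and `Σ_k c_k(α) c_k(β) ≤ 1/4` for any two states; a
convex combination of product states therefore gives at most `1/4`.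
-/

open ComplexOrder

/-- The qubit state space: self-adjoint 2×2 complex matrices. -/
noncomputable abbrev QubitSpace := selfAdjoint (Matrix (Fin 2) (Fin 2) ℂ)

/-- The trace order unit on the qubit state space. -/
noncomputable def qTrace : QubitSpace →ₗ[ℝ] ℝ where
  toFun a := (Matrix.trace (a : Matrix (Fin 2) (Fin 2) ℂ)).re
  map_add' x y := by simp
  map_smul' r x := by simp [Complex.smul_re]

open Matrix

local notation "M₂" => Matrix (Fin 2) (Fin 2) ℂ

namespace QubitSpace

noncomputable def pauliMatrix : Fin 4 → M₂ :=
  ![1, !![0, 1; 1, 0], !![0, -Complex.I; Complex.I, 0], !![1, 0; 0, -1]]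

lemma isHermitian_pauliMatrix (μ : Fin 4) : (pauliMatrix μ).IsHermitian := by
  fin_cases μ <;> ext i j <;> fin_cases i <;> fin_cases j <;>
    simp [pauliMatrix, conjTranspose_apply]

noncomputable def pauli (μ : Fin 4) : QubitSpace :=
  ⟨pauliMatrix μ, isHermitian_pauliMatrix μ⟩

noncomputable def pauliCoord (μ : Fin 4) : QubitSpace →ₗ[ℝ] ℝ where
  toFun x := (trace (pauliMatrix μ * (x : M₂))).re / 2
  map_add' x y := by simp [Matrix.mul_add, add_div]
  map_smul' r x := by simp [mul_div_assoc]

lemma pauliCoord_pauli (μ ν : Fin 4) : pauliCoord μ (pauli ν) = if μ = ν then 1 else 0 := by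
  fin_cases μ <;> fin_cases ν <;>
    simp [pauliCoord, pauli, pauliMatrix, trace_fin_two]

lemma sum_pauliCoord_smul_pauli (x : QubitSpace) : ∑ μ, pauliCoord μ x • pauli μ = x := by
  have hx : (x : M₂)ᴴ = x := x.prop
  apply Subtype.ext
  ext i j
  have hij := congrFun (congrFun hx i) j
  fin_cases i <;> fin_cases j <;>
    simp [Fin.sum_univ_four, pauliCoord, pauli, pauliMatrix, trace_fin_two, Complex.ext_iff,
      conjTranspose_apply, vecMul, dotProduct, Fin.sum_univ_two] at hij ⊢ <;>
    constructor <;> linarith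

noncomputable def densityOf : (QubitSpace →ₗ[ℝ] ℝ) →ₗ[ℝ] QubitSpace :=
  (1 / 2 : ℝ) • ∑ μ, (LinearMap.applyₗ (pauli μ)).smulRight (pauli μ)

lemma densityOf_apply (a : QubitSpace →ₗ[ℝ] ℝ) :
    densityOf a = (1 / 2 : ℝ) • ∑ μ, a (pauli μ) • pauli μ := by
  simp [densityOf]

lemma re_trace_densityOf_mul (a : QubitSpace →ₗ[ℝ] ℝ) (x : QubitSpace) :
    (trace ((densityOf a : M₂) * (x : M₂))).re = a x := by
  conv_rhs => rw [← sum_pauliCoord_smul_pauli x]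
  simp [densityOf_apply, Finset.sum_mul, trace_sum, pauliCoord, pauli, Finset.mul_sum,
    div_eq_inv_mul, mul_assoc, mul_comm]

lemma posSemidef_densityOf {a : QubitSpace →ₗ[ℝ] ℝ}
    (ha : ∀ x : QubitSpace, (x : M₂).PosSemidef → 0 ≤ a x) :
    (densityOf a : M₂).PosSemidef := by
  refine .of_dotProduct_mulVec_nonneg (densityOf a).prop fun z ↦ ?_
  set P : QubitSpace := ⟨vecMulVec z (star z), (posSemidef_vecMulVec_self_star z).isHermitian⟩
  have hquad : star z ⬝ᵥ ((densityOf a : M₂) *ᵥ z) =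
      trace ((densityOf a : M₂) * (P : M₂)) := by
    rw [show (P : M₂) = vecMulVec z (star z) from rfl, mul_vecMulVec, trace_vecMulVec,
      dotProduct_comm]
  refine Complex.nonneg_iff.mpr ⟨?_, ?_⟩
  · rw [hquad, re_trace_densityOf_mul]
    exact ha P (posSemidef_vecMulVec_self_star z)
  · exact (IsHermitian.im_star_dotProduct_mulVec_self (densityOf a).prop z).symm

lemma densityOf_pauliCoord (μ : Fin 4) : densityOf (pauliCoord μ) = (1 / 2 : ℝ) • pauli μ := by
  simp [densityOf_apply, pauliCoord_pauli, ite_smul]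

lemma qTrace_eq_two_smul_pauliCoord_zero : qTrace = (2 : ℝ) • pauliCoord 0 := by
  ext x
  simp [qTrace, pauliCoord, pauliMatrix, mul_div_cancel₀]

lemma densityOf_qTrace : densityOf qTrace = pauli 0 := by
  rw [qTrace_eq_two_smul_pauliCoord_zero, map_smul, densityOf_pauliCoord, smul_smul]
  norm_num

noncomputable def swapState : (QubitSpace →ₗ[ℝ] ℝ) →ₗ[ℝ] (QubitSpace →ₗ[ℝ] ℝ) →ₗ[ℝ] ℝ :=
  (1 / 2 : ℝ) • (LinearMap.applyₗ ∘ₗ densityOf)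

lemma swapState_apply (a b : QubitSpace →ₗ[ℝ] ℝ) : swapState a b = b (densityOf a) / 2 := by
  simp [swapState, div_eq_inv_mul]

lemma swapState_nonneg {a b : QubitSpace →ₗ[ℝ] ℝ}
    (ha : ∀ x : QubitSpace, (x : M₂).PosSemidef → 0 ≤ a x)
    (hb : ∀ x : QubitSpace, (x : M₂).PosSemidef → 0 ≤ b x) : 0 ≤ swapState a b := by
  rw [swapState_apply]
  exact div_nonneg (hb _ (posSemidef_densityOf ha)) zero_le_two

lemma swapState_qTrace : swapState qTrace qTrace = 1 := by
  rw [swapState_apply, densityOf_qTrace, qTrace_eq_two_smul_pauliCoord_zero]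
  simp [pauliCoord_pauli]

lemma swapState_pauliCoord (μ : Fin 4) : swapState (pauliCoord μ) (pauliCoord μ) = 1 / 4 := by
  rw [swapState_apply, densityOf_pauliCoord]
  norm_num [pauliCoord_pauli]

lemma re_det_eq_pauliCoord_sq_sub (x : QubitSpace) :
    (det (x : M₂)).re = pauliCoord 0 x ^ 2 - ∑ k : Fin 3, pauliCoord k.succ x ^ 2 := by
  have hx : (x : M₂)ᴴ = x := x.prop
  have h00 := congrFun (congrFun hx 0) 0
  have h10 := congrFun (congrFun hx 1) 0
  simp [Fin.sum_univ_three, det_fin_two, pauliCoord, pauliMatrix, trace_fin_two,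
    Complex.ext_iff, conjTranspose_apply, vecMul, dotProduct, Fin.sum_univ_two] at h00 h10 ⊢
  obtain ⟨h10re, h10im⟩ := h10
  have him : ((x : M₂) 0 0).im = 0 := by linarith
  rw [← h10re, ← h10im, him]
  ring

lemma sum_sq_pauliCoord_le {x : QubitSpace} (hx : (x : M₂).PosSemidef) (hx₁ : qTrace x = 1) :
    ∑ k : Fin 3, pauliCoord k.succ x ^ 2 ≤ 1 / 4 := by
  have hdet : 0 ≤ (det (x : M₂)).re := (Complex.nonneg_iff.mp hx.det_nonneg).1
  have hx₀ : pauliCoord 0 x = 1 / 2 := by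
    rw [qTrace_eq_two_smul_pauliCoord_zero] at hx₁
    simp only [LinearMap.smul_apply, smul_eq_mul] at hx₁
    linarith
  rw [re_det_eq_pauliCoord_sq_sub, hx₀] at hdet
  linarith

lemma sum_pauliCoord_mul_le {x y : QubitSpace} (hx : (x : M₂).PosSemidef) (hx₁ : qTrace x = 1)
    (hy : (y : M₂).PosSemidef) (hy₁ : qTrace y = 1) :
    ∑ k : Fin 3, pauliCoord k.succ x * pauliCoord k.succ y ≤ 1 / 4 :=
  calc ∑ k : Fin 3, pauliCoord k.succ x * pauliCoord k.succ y
      ≤ ∑ k : Fin 3, (pauliCoord k.succ x ^ 2 + pauliCoord k.succ y ^ 2) / 2 :=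
        Finset.sum_le_sum fun k _ ↦ by
          linarith [two_mul_le_add_sq (pauliCoord k.succ x) (pauliCoord k.succ y)]
    _ = (∑ k : Fin 3, pauliCoord k.succ x ^ 2 + ∑ k : Fin 3, pauliCoord k.succ y ^ 2) / 2 := by
        rw [← Finset.sum_div, Finset.sum_add_distrib]
    _ ≤ 1 / 4 := by linarith [sum_sq_pauliCoord_le hx hx₁, sum_sq_pauliCoord_le hy hy₁]

end QubitSpace

open QubitSpace

/-- For `A` the Hermitian 2×2 matrices with trace order unit, the maximal
tensor product of `A` with itself strictly contains the minimal one: there is a bilinear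
form on `A* × A*` that is nonnegative on pairs of positive functionals and normalized,
but is not a convex combination of product states. -/
theorem quantum_max_tensor_strictly_contains_min :
    ∃ ω : (QubitSpace →ₗ[ℝ] ℝ) →ₗ[ℝ] (QubitSpace →ₗ[ℝ] ℝ) →ₗ[ℝ] ℝ,
      (∀ a b : QubitSpace →ₗ[ℝ] ℝ,
        (∀ x : QubitSpace, (x : Matrix (Fin 2) (Fin 2) ℂ).PosSemidef → 0 ≤ a x) →
        (∀ x : QubitSpace, (x : Matrix (Fin 2) (Fin 2) ℂ).PosSemidef → 0 ≤ b x) →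
        0 ≤ ω a b) ∧
      ω qTrace qTrace = 1 ∧
      ¬∃ (n : ℕ) (p : Fin n → ℝ) (α β : Fin n → QubitSpace),
        (∀ i, 0 ≤ p i) ∧ (∑ i, p i = 1) ∧
        (∀ i, (α i : Matrix (Fin 2) (Fin 2) ℂ).PosSemidef ∧ qTrace (α i) = 1 ∧
              (β i : Matrix (Fin 2) (Fin 2) ℂ).PosSemidef ∧ qTrace (β i) = 1) ∧
        (∀ a b, ω a b = ∑ i, p i * (a (α i) * b (β i))) := by
  refine ⟨swapState, fun a b ha hb ↦ swapState_nonneg ha hb, swapState_qTrace, ?_⟩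
  rintro ⟨n, p, α, β, hp, hp₁, hstate, hsep⟩
  have : (3 / 4 : ℝ) ≤ 1 / 4 :=
    calc (3 / 4 : ℝ) = ∑ k : Fin 3, swapState (pauliCoord k.succ) (pauliCoord k.succ) := by
          norm_num [swapState_pauliCoord]
      _ = ∑ i, p i * ∑ k : Fin 3, pauliCoord k.succ (α i) * pauliCoord k.succ (β i) := by
          simp only [hsep, Finset.mul_sum]
          exact Finset.sum_comm
      _ ≤ ∑ i, p i * (1 / 4) := by
          gcongr with i
          · exact hp i
          obtain ⟨hα, hα₁, hβ, hβ₁⟩ := hstate i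
          exact sum_pauliCoord_mul_le hα hα₁ hβ hβ₁
      _ = 1 / 4 := by rw [← Finset.sum_mul, hp₁, one_mul]
  norm_num at this
end

section
/- Let A be an abstract state space and suppose ω₁, …, ωₙ ∈ Ω_A are distinguishable by a one-shot measurement (effects aᵢ with ∑ aᵢ = u and aᵢ(ωⱼ) = δᵢⱼ), and suppose for each i there is a positive norm-nonincreasing map Prep_i : A → A ⊗_min A with Prep_i(α) = u(α) · (ωᵢ ⊗ ωᵢ) for all α ∈ A₊. Define T : A → A ⊗_min A by T(α) = ∑ᵢ aᵢ(α) (ωᵢ ⊗ ωᵢ). Then T is a positive linear map with T(ωᵢ) = ωᵢ ⊗ ωᵢ for all i, T is u-preserving on the convex hull of the ωᵢ, and both marginals of T(σ) equal σ for every σ in the convex hull of {ω₁, …, ωₙ}. -/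
/-- Given states `ωᵢ` distinguishable by a one-shot measurement `(aᵢ)`, the
map `T(α) = ∑ᵢ aᵢ(α)·(ωᵢ ⊗ ωᵢ)` (obtained from the preparation maps `Prep_i` composed
with the measurement) is positive, preserves the order unit on the convex hull of the
`ωᵢ`, and both marginals of `T(σ)` equal `σ` for every `σ` in that convex hull. -/
theorem cloning_map_from_distinguishing_measurement
    {V : Type*} [AddCommGroup V] [Module ℝ V]
    (pos : Set V) (u : V →ₗ[ℝ] ℝ) (hu : ∀ x ∈ pos, 0 ≤ u x)
    {n : ℕ} (ω : Fin n → V) (hω : ∀ i, ω i ∈ pos ∧ u (ω i) = 1)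
    (a : Fin n → (V →ₗ[ℝ] ℝ))
    (hapos : ∀ i, ∀ x ∈ pos, 0 ≤ a i x)
    (hsum : ∑ i, a i = u)
    (hdist : ∀ i j, a i (ω j) = if i = j then 1 else 0)
    (T : V → (V →ₗ[ℝ] ℝ) → (V →ₗ[ℝ] ℝ) → ℝ)
    (hT : ∀ α f g, T α f g = ∑ i, a i α * (f (ω i) * g (ω i))) :
    (∀ α ∈ pos, ∀ f g : V →ₗ[ℝ] ℝ,
      (∀ x ∈ pos, 0 ≤ f x) → (∀ x ∈ pos, 0 ≤ g x) → 0 ≤ T α f g) ∧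
    (∀ i, T (ω i) = fun f g => f (ω i) * g (ω i)) ∧
    (∀ σ ∈ convexHull ℝ (Set.range ω), T σ u u = u σ) ∧
    (∀ σ ∈ convexHull ℝ (Set.range ω),
      (∀ g : V →ₗ[ℝ] ℝ, T σ u g = g σ) ∧ (∀ f : V →ₗ[ℝ] ℝ, T σ f u = f σ)) := by
  -- key: for linear h and any f g, the set where T σ f g = h σ is convex
  have key : ∀ (f g h : V →ₗ[ℝ] ℝ), (∀ j, T (ω j) f g = h (ω j)) →
      ∀ σ ∈ convexHull ℝ (Set.range ω), T σ f g = h σ := by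
    intro f g h hgen σ hσ
    have hconv : Convex ℝ {σ : V | T σ f g = h σ} := by
      intro x hx y hy s t hs ht hst
      simp only [Set.mem_setOf_eq] at hx hy ⊢
      rw [hT] at hx hy
      simp only [hT, map_add, map_smul, smul_eq_mul, add_mul, Finset.sum_add_distrib,
        mul_assoc, ← Finset.mul_sum, hx, hy]
    have : Set.range ω ⊆ {σ : V | T σ f g = h σ} := by
      rintro _ ⟨j, rfl⟩; exact hgen j
    exact convexHull_min this hconv hσ
  have hTω : ∀ i, T (ω i) = fun f g => f (ω i) * g (ω i) := by
    intro i
    funext f g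
    rw [hT]
    have : ∀ j, a j (ω i) * (f (ω j) * g (ω j))
        = if j = i then f (ω i) * g (ω i) else 0 := by
      intro j
      rw [hdist]
      split <;> simp_all
    simp [this]
  refine ⟨?_, hTω, ?_, ?_⟩
  · intro α hα f g hf hg
    rw [hT]
    exact Finset.sum_nonneg fun i _ => mul_nonneg (hapos i α hα)
      (mul_nonneg (hf _ (hω i).1) (hg _ (hω i).1))
  · intro σ hσ
    exact key u u u (fun j => by rw [hTω]; simp [(hω j).2]) σ hσ
  · intro σ hσ
    constructor
    · intro g
      exact key u g g (fun j => by rw [hTω]; simp [(hω j).2]) σ hσ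
    · intro f
      exact key f u f (fun j => by rw [hTω]; simp [(hω j).2]) σ hσ
end

section
/- Let A be an abstract state space and S = {ω₁, …, ωₙ} ⊆ Ω_A a set of states distinguishable by a single measurement (effects aᵢ, ∑ aᵢ = u, aᵢ(ωⱼ) = δᵢⱼ). Then the positive linear map T : A → A ⊗_min A defined by T(α) = ∑ᵢ aᵢ(α) · (ωᵢ ⊗ ωᵢ) broadcasts every state σ in the convex hull of S: both marginals of T(σ) equal σ. -/
/-!
A state `σ` in the convex hull of `ω₁, …, ωₙ` lies in their span, and there the
measurement reads off its coordinates: `σ = ∑ᵢ aᵢ(σ) ωᵢ`. Since `u(ωᵢ) = 1`, contracting one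
factor of `T(σ) = ∑ᵢ aᵢ(σ) ωᵢ ⊗ ωᵢ` with `u` leaves `∑ᵢ aᵢ(σ) ωᵢ = σ`.
-/

open Submodule

section Biorthogonal

variable {R V ι : Type*} [CommSemiring R] [AddCommMonoid V] [Module R V]
  [Fintype ι] [DecidableEq ι]

theorem sum_apply_smul_eq_of_mem_span (ω : ι → V) (a : ι → V →ₗ[R] R)
    (hdist : ∀ i j, a i (ω j) = if i = j then 1 else 0)
    {σ : V} (hσ : σ ∈ span R (Set.range ω)) :
    ∑ i, a i σ • ω i = σ := by
  let P : V →ₗ[R] V := ∑ i, (a i).smulRight (ω i)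
  have hP : Set.EqOn P (LinearMap.id : V →ₗ[R] V) (Set.range ω) := by
    rintro _ ⟨j, rfl⟩
    simp [P, hdist]
  simpa [P] using LinearMap.eqOn_span hP hσ

theorem apply_eq_sum_of_mem_span (ω : ι → V) (a : ι → V →ₗ[R] R)
    (hdist : ∀ i j, a i (ω j) = if i = j then 1 else 0)
    {σ : V} (hσ : σ ∈ span R (Set.range ω)) (f : V →ₗ[R] R) :
    f σ = ∑ i, a i σ * f (ω i) := by
  conv_lhs => rw [← sum_apply_smul_eq_of_mem_span ω a hdist hσ]
  simp [map_sum]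

end Biorthogonal

theorem broadcasting_map_on_convex_hull_general
    {V : Type*} [AddCommGroup V] [Module ℝ V]
    (pos : Set V) (u : V →ₗ[ℝ] ℝ)
    {n : ℕ} (ω : Fin n → V) (hω : ∀ i, ω i ∈ pos ∧ u (ω i) = 1)
    (a : Fin n → (V →ₗ[ℝ] ℝ))
    (hapos : ∀ i, ∀ x ∈ pos, 0 ≤ a i x)
    (hdist : ∀ i j, a i (ω j) = if i = j then 1 else 0)
    (T : V → (V →ₗ[ℝ] ℝ) → (V →ₗ[ℝ] ℝ) → ℝ)
    (hT : ∀ α f g, T α f g = ∑ i, a i α * (f (ω i) * g (ω i))) :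
    (∀ α ∈ pos, ∀ f g : V →ₗ[ℝ] ℝ,
      (∀ x ∈ pos, 0 ≤ f x) → (∀ x ∈ pos, 0 ≤ g x) → 0 ≤ T α f g) ∧
    ∀ σ ∈ convexHull ℝ (Set.range ω),
      (∀ g : V →ₗ[ℝ] ℝ, T σ u g = g σ) ∧ (∀ f : V →ₗ[ℝ] ℝ, T σ f u = f σ) := by
  have hu : ∀ i, u (ω i) = 1 := fun i => (hω i).2
  refine ⟨fun α hα f g hf hg => ?_, fun σ hσ => ?_⟩
  · rw [hT]
    exact Finset.sum_nonneg fun i _ =>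
      mul_nonneg (hapos i α hα) (mul_nonneg (hf _ (hω i).1) (hg _ (hω i).1))
  · have hspan : σ ∈ span ℝ (Set.range ω) :=
      convexHull_min subset_span (span ℝ _).convex hσ
    refine ⟨fun g => ?_, fun f => ?_⟩
    · simp only [hT, hu, one_mul, apply_eq_sum_of_mem_span ω a hdist hspan g]
    · simp only [hT, hu, mul_one, apply_eq_sum_of_mem_span ω a hdist hspan f]

/-- For states `ω₁, …, ωₙ` distinguishable by a single measurement
(`∑ aᵢ = u`, `aᵢ(ωⱼ) = δᵢⱼ`), the positive map `T(α) = ∑ᵢ aᵢ(α)·(ωᵢ ⊗ ωᵢ)` broadcasts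
every state `σ` in the convex hull of `{ω₁, …, ωₙ}`: both marginals of `T(σ)` equal `σ`. -/
theorem broadcasting_map_on_convex_hull
    {V : Type*} [AddCommGroup V] [Module ℝ V]
    (pos : Set V) (u : V →ₗ[ℝ] ℝ)
    {n : ℕ} (ω : Fin n → V) (hω : ∀ i, ω i ∈ pos ∧ u (ω i) = 1)
    (a : Fin n → (V →ₗ[ℝ] ℝ))
    (hapos : ∀ i, ∀ x ∈ pos, 0 ≤ a i x)
    (hsum : ∑ i, a i = u)
    (hdist : ∀ i j, a i (ω j) = if i = j then 1 else 0)
    (T : V → (V →ₗ[ℝ] ℝ) → (V →ₗ[ℝ] ℝ) → ℝ)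
    (hT : ∀ α f g, T α f g = ∑ i, a i α * (f (ω i) * g (ω i))) :
    (∀ α ∈ pos, ∀ f g : V →ₗ[ℝ] ℝ,
      (∀ x ∈ pos, 0 ≤ f x) → (∀ x ∈ pos, 0 ≤ g x) → 0 ≤ T α f g) ∧
    ∀ σ ∈ convexHull ℝ (Set.range ω),
      (∀ g : V →ₗ[ℝ] ℝ, T σ u g = g σ) ∧ (∀ f : V →ₗ[ℝ] ℝ, T σ f u = f σ) :=
  broadcasting_map_on_convex_hull_general pos u ω hω a hapos hdist T hT
end

section
/- Suppose A is an abstract state space that can be teleported through a copy of itself: there exist an effect f on A ⊗_max A (a bilinear functional nonnegative on products of states, bounded by u_A ⊗ u_A) and a state ω ∈ A ⊗_max A such that ω̂ ∘ f̂ : A → A is proportional to an order-isomorphism. Then A is weakly self-dual: there exists an order-isomorphism between A and its dual A* (with the dual cone ordering). -/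
/-!
Rescaling `f̂ ∘ η⁻¹` by `c⁻¹` gives a positive map `L : A → A*` with `ω̂ ∘ L = id`. Since
`A` and `A*` have the same finite dimension, the left inverse `ω̂` makes `L` bijective, and
as `ω̂` is positive too, `x ∈ A₊ ↔ L x ∈ A*₊`.
-/

section

variable {K V W : Type*} [DivisionRing K] [AddCommGroup V] [Module K V] [AddCommGroup W]
  [Module K W] [FiniteDimensional K V] [FiniteDimensional K W]

theorem LinearMap.bijective_of_leftInverse_of_finrank_eq (L : V →ₗ[K] W) (R : W →ₗ[K] V)
    (hRL : ∀ x, R (L x) = x) (hdim : Module.finrank K V = Module.finrank K W) :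
    Function.Bijective L :=
  have hinj : Function.Injective L := Function.LeftInverse.injective hRL
  ⟨hinj, (LinearMap.injective_iff_surjective_of_finrank_eq_finrank hdim).mp hinj⟩

theorem exists_linearEquiv_mem_iff_of_leftInverse {P : Set V} {Q : Set W}
    (L : V →ₗ[K] W) (R : W →ₗ[K] V) (hRL : ∀ x, R (L x) = x)
    (hdim : Module.finrank K V = Module.finrank K W)
    (hL : Set.MapsTo L P Q) (hR : Set.MapsTo R Q P) :
    ∃ φ : V ≃ₗ[K] W, ∀ x, x ∈ P ↔ φ x ∈ Q :=
  ⟨.ofBijective L (L.bijective_of_leftInverse_of_finrank_eq R hRL hdim), fun x =>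
    ⟨fun hx => hL hx, fun hLx => hRL x ▸ hR hLx⟩⟩

end

theorem teleportation_through_self_implies_weak_self_duality_general
    {A : Type*} [AddCommGroup A] [Module ℝ A] [FiniteDimensional ℝ A]
    (pos : Set A)
    (f : A →ₗ[ℝ] A →ₗ[ℝ] ℝ)
    (hfpos : ∀ x ∈ pos, ∀ y ∈ pos, 0 ≤ f x y)
    (ωhat : (A →ₗ[ℝ] ℝ) →ₗ[ℝ] A)
    (hωpos : ∀ a : A →ₗ[ℝ] ℝ, (∀ x ∈ pos, 0 ≤ a x) → ωhat a ∈ pos)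
    (c : ℝ) (hc : 0 < c) (η : A ≃ₗ[ℝ] A) (hη : ∀ x : A, x ∈ pos ↔ η x ∈ pos)
    (hcomp : ∀ x : A, ωhat (f x) = c • η x) :
    ∃ φ : A ≃ₗ[ℝ] (A →ₗ[ℝ] ℝ), ∀ x : A, x ∈ pos ↔ (∀ y ∈ pos, 0 ≤ φ x y) := by
  set L : A →ₗ[ℝ] (A →ₗ[ℝ] ℝ) := c⁻¹ • (f ∘ₗ η.symm.toLinearMap)
  have hωL : ∀ x, ωhat (L x) = x := fun x => by
    simp [L, hcomp, smul_smul, hc.ne']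
  have hL : Set.MapsTo L pos {a | ∀ y ∈ pos, 0 ≤ a y} := fun x hx y hy => by
    have hηx : η.symm x ∈ pos := (hη _).2 (by simpa using hx)
    exact mul_nonneg (inv_nonneg.2 hc.le) (hfpos _ hηx _ hy)
  exact exists_linearEquiv_mem_iff_of_leftInverse L ωhat hωL Subspace.dual_finrank_eq.symm
    hL hωpos

/-- If a state space `A` can be teleported through a copy of itself — i.e.
there are an effect `f` on `A ⊗_max A` (with operator `f̂ : A → A*` positive and bounded
by the order unit) and a state `ω` (with positive operator `ω̂ : A* → A`) such that
`ω̂ ∘ f̂` is proportional to an order-isomorphism — then `A` is weakly self-dual: there is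
an order-isomorphism between `A` and `A*` with the dual cone ordering. -/
theorem teleportation_through_self_implies_weak_self_duality
    {A : Type*} [AddCommGroup A] [Module ℝ A] [FiniteDimensional ℝ A]
    (pos : Set A) (u : A →ₗ[ℝ] ℝ)
    (f : A →ₗ[ℝ] A →ₗ[ℝ] ℝ)
    (hfpos : ∀ x ∈ pos, ∀ y ∈ pos, 0 ≤ f x y)
    (hfbd : ∀ x ∈ pos, ∀ y ∈ pos, f x y ≤ u x * u y)
    (ωhat : (A →ₗ[ℝ] ℝ) →ₗ[ℝ] A)
    (hωpos : ∀ a : A →ₗ[ℝ] ℝ, (∀ x ∈ pos, 0 ≤ a x) → ωhat a ∈ pos)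
    (c : ℝ) (hc : 0 < c) (η : A ≃ₗ[ℝ] A) (hη : ∀ x : A, x ∈ pos ↔ η x ∈ pos)
    (hcomp : ∀ x : A, ωhat (f x) = c • η x) :
    ∃ φ : A ≃ₗ[ℝ] (A →ₗ[ℝ] ℝ), ∀ x : A, x ∈ pos ↔ (∀ y ∈ pos, 0 ≤ φ x y) :=
  teleportation_through_self_implies_weak_self_duality_general pos f hfpos ωhat hωpos c hc η hη
    hcomp
end

section
/- Let Ω be a compact convex subset of ℝ^d of affine dimension d that is not a simplex. Then there exists a point ω ∈ Ω admitting two distinct representations ω = ∑_{i=1}^{N₀} p⁰ᵢ μ⁰ᵢ = ∑_{j=1}^{N₁} p¹ⱼ μ¹ⱼ as convex combinations (with all weights strictly positive) of extreme points, where the sets {μ⁰ᵢ} and {μ¹ⱼ} are disjoint and N₀ + N₁ ≤ d + 2. -/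
/-!
If `Ω` had at most `d + 1` extreme points, Krein–Milman would make `Ω` the convex hull of this
finite set; that set spans `ℝ^d`, so with at most `d + 1` points it is affinely independent and
`Ω` is a simplex. Hence `Ω` has `d + 2` extreme points. They are affinely dependent, so Radon's
theorem splits them into two disjoint parts whose convex hulls meet, and Carathéodory's theorem
writes the common point as a strictly positive combination of distinct points of each part.
-/

open Module Finset

theorem affineIndependent_of_affineSpan_eq_top_of_card_le {k V : Type*} [Field k]
    [AddCommGroup V] [Module k V] {t : Finset V}
    (hspan : affineSpan k (t : Set V) = ⊤) (hcard : #t ≤ finrank k V + 1) :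
    AffineIndependent k ((↑) : t → V) := by
  replace hspan : affineSpan k (Set.range ((↑) : t → V)) = ⊤ := by simpa using hspan
  have hpos : 0 < Fintype.card t := AffineSubspace.card_pos_of_affineSpan_eq_top k V V hspan
  rw [affineIndependent_iff_le_finrank_vectorSpan k _ (Nat.succ_pred_eq_of_pos hpos).symm,
    AffineSubspace.vectorSpan_eq_top_of_affineSpan_eq_top k V V hspan, finrank_top]
  simp only [Fintype.card_coe, Nat.pred_eq_sub_one] at hpos ⊢
  omega

section KreinMilman

variable {E : Type*} [AddCommGroup E] [Module ℝ E] [TopologicalSpace E] [T2Space E]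
  [IsTopologicalAddGroup E] [ContinuousSMul ℝ E] [LocallyConvexSpace ℝ E] {s : Set E}

theorem convexHull_extremePoints_eq_of_finite (hcomp : IsCompact s) (hconv : Convex ℝ s)
    (hfin : (s.extremePoints ℝ).Finite) : convexHull ℝ (s.extremePoints ℝ) = s := by
  simpa only [(hfin.isClosed_convexHull ℝ).closure_eq] using
    closure_convexHull_extremePoints hcomp hconv

theorem exists_finset_extremePoints_card_eq_of_not_simplex (hcomp : IsCompact s)
    (hconv : Convex ℝ s) (hspan : affineSpan ℝ s = ⊤)
    (hns : ¬∃ t : Finset E, AffineIndependent ℝ ((↑) : t → E) ∧ s = convexHull ℝ (t : Set E)) :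
    ∃ t : Finset E, (t : Set E) ⊆ s.extremePoints ℝ ∧ #t = finrank ℝ E + 2 := by
  suffices hle : ((finrank ℝ E + 2 : ℕ) : ℕ∞) ≤ (s.extremePoints ℝ).encard by
    obtain ⟨T, hTs, hT⟩ := Set.exists_subset_encard_eq hle
    have hTfin : T.Finite := Set.finite_of_encard_eq_coe hT
    refine ⟨hTfin.toFinset, by simpa using hTs, ?_⟩
    rwa [hTfin.encard_eq_coe_toFinset_card, Nat.cast_inj] at hT
  by_contra! hlt
  have hfin : (s.extremePoints ℝ).Finite :=
    Set.finite_of_encard_le_coe (Order.le_of_lt_add_one hlt)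
  have hs : s = convexHull ℝ (hfin.toFinset : Set E) := by
    rw [hfin.coe_toFinset, convexHull_extremePoints_eq_of_finite hcomp hconv hfin]
  refine hns ⟨hfin.toFinset, affineIndependent_of_affineSpan_eq_top_of_card_le ?_ ?_, hs⟩
  · rwa [hs, affineSpan_convexHull] at hspan
  · rw [hfin.encard_eq_coe_toFinset_card, Nat.cast_lt] at hlt
    omega

end KreinMilman

theorem Finset.card_add_card_le_of_injective_of_disjoint {α ι₀ ι₁ : Type*} [Fintype ι₀]
    [Fintype ι₁] {t : Finset α} {f₀ : ι₀ → α} {f₁ : ι₁ → α} (hf₀ : Function.Injective f₀)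
    (hf₁ : Function.Injective f₁) (hdisj : ∀ i j, f₀ i ≠ f₁ j) (ht₀ : ∀ i, f₀ i ∈ t)
    (ht₁ : ∀ j, f₁ j ∈ t) : Fintype.card ι₀ + Fintype.card ι₁ ≤ #t := by
  rw [← Fintype.card_sum, ← Finset.card_univ]
  exact Finset.card_le_card_of_injOn (Sum.elim f₀ f₁) (by rintro (i | j) - <;> simp [ht₀, ht₁])
    (hf₀.sumElim hf₁ hdisj).injOn

section Convex

variable {𝕜 E : Type*} [Field 𝕜] [LinearOrder 𝕜] [IsStrictOrderedRing 𝕜] [AddCommGroup E]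
  [Module 𝕜 E]

theorem exists_fin_pos_convex_combination_of_mem_convexHull {s : Set E} {x : E}
    (hx : x ∈ convexHull 𝕜 s) :
    ∃ (N : ℕ) (p : Fin N → 𝕜) (μ : Fin N → E), (∀ i, 0 < p i) ∧ ∑ i, p i = 1 ∧
      Function.Injective μ ∧ (∀ i, μ i ∈ s) ∧ ∑ i, p i • μ i = x := by
  obtain ⟨ι, _, z, w, hzs, hz, hw, hw₁, hwz⟩ := eq_pos_convex_span_of_mem_convexHull hx
  let e := Fintype.equivFin ι
  refine ⟨Fintype.card ι, w ∘ e.symm, z ∘ e.symm, fun i => hw _, ?_,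
    hz.injective.comp e.symm.injective, fun i => hzs ⟨_, rfl⟩, ?_⟩
  · rwa [← e.symm.sum_comp] at hw₁
  · rwa [← e.symm.sum_comp] at hwz

theorem exists_disjoint_pos_convex_combinations_of_not_affineIndependent {t : Finset E}
    (ht : ¬AffineIndependent 𝕜 ((↑) : t → E)) :
    ∃ (N₀ N₁ : ℕ) (p₀ : Fin N₀ → 𝕜) (p₁ : Fin N₁ → 𝕜) (μ₀ : Fin N₀ → E) (μ₁ : Fin N₁ → E),
      (∀ i, 0 < p₀ i) ∧ (∀ j, 0 < p₁ j) ∧ (∑ i, p₀ i = 1) ∧ (∑ j, p₁ j = 1) ∧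
      (∀ i, μ₀ i ∈ t) ∧ (∀ j, μ₁ j ∈ t) ∧ Function.Injective μ₀ ∧ Function.Injective μ₁ ∧
      (∀ i j, μ₀ i ≠ μ₁ j) ∧ ∑ i, p₀ i • μ₀ i = ∑ j, p₁ j • μ₁ j ∧ N₀ + N₁ ≤ #t := by
  obtain ⟨I, x, hx₀, hx₁⟩ := Convex.radon_partition ht
  obtain ⟨N₀, p₀, μ₀, hp₀, hsum₀, hinj₀, hμ₀, rfl⟩ :=
    exists_fin_pos_convex_combination_of_mem_convexHull hx₀
  obtain ⟨N₁, p₁, μ₁, hp₁, hsum₁, hinj₁, hμ₁, hx⟩ :=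
    exists_fin_pos_convex_combination_of_mem_convexHull hx₁
  have hdisj : ∀ i j, μ₀ i ≠ μ₁ j := fun i j =>
    ((Set.disjoint_image_iff Subtype.val_injective).2 disjoint_compl_right).ne_of_mem
      (hμ₀ i) (hμ₁ j)
  have hmem : ∀ {J : Set t} {y : E}, y ∈ (↑) '' J → y ∈ t := by
    rintro J _ ⟨y, -, rfl⟩
    exact y.2
  refine ⟨N₀, N₁, p₀, p₁, μ₀, μ₁, hp₀, hp₁, hsum₀, hsum₁, fun i => hmem (hμ₀ i),
    fun j => hmem (hμ₁ j), hinj₀, hinj₁, hdisj, hx.symm, ?_⟩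
  simpa using Finset.card_add_card_le_of_injective_of_disjoint hinj₀ hinj₁ hdisj
    (fun i => hmem (hμ₀ i)) (fun j => hmem (hμ₁ j))

end Convex

/-- A compact convex subset `Ω ⊆ ℝ^d` of full affine dimension `d` that is
not a simplex has a point `ω` with two distinct convex decompositions (all weights
strictly positive) into disjoint finite sets of extreme points, with at most `d + 2`
extreme points in total. -/
theorem nonsimplex_has_two_disjoint_decompositions
    {d : ℕ} (Ω : Set (Fin d → ℝ)) (hcomp : IsCompact Ω) (hconv : Convex ℝ Ω)
    (hfull : affineSpan ℝ Ω = ⊤)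
    (hns : ¬∃ s : Finset (Fin d → ℝ), AffineIndependent ℝ ((↑) : s → (Fin d → ℝ)) ∧
      Ω = convexHull ℝ (s : Set (Fin d → ℝ))) :
    ∃ ω ∈ Ω, ∃ (N₀ N₁ : ℕ) (p₀ : Fin N₀ → ℝ) (p₁ : Fin N₁ → ℝ)
      (μ₀ : Fin N₀ → (Fin d → ℝ)) (μ₁ : Fin N₁ → (Fin d → ℝ)),
      (∀ i, 0 < p₀ i) ∧ (∀ j, 0 < p₁ j) ∧
      (∑ i, p₀ i = 1) ∧ (∑ j, p₁ j = 1) ∧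
      (∀ i, μ₀ i ∈ Set.extremePoints ℝ Ω) ∧ (∀ j, μ₁ j ∈ Set.extremePoints ℝ Ω) ∧
      Function.Injective μ₀ ∧ Function.Injective μ₁ ∧
      (∀ i j, μ₀ i ≠ μ₁ j) ∧
      (∑ i, p₀ i • μ₀ i = ω) ∧ (∑ j, p₁ j • μ₁ j = ω) ∧
      N₀ + N₁ ≤ d + 2 := by
  obtain ⟨t, hext, hcard⟩ :=
    exists_finset_extremePoints_card_eq_of_not_simplex hcomp hconv hfull hns
  rw [finrank_fin_fun] at hcard
  have hdep : ¬AffineIndependent ℝ ((↑) : t → (Fin d → ℝ)) := fun hind => by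
    have := hind.card_le_finrank_succ.trans (Nat.succ_le_succ (Submodule.finrank_le _))
    simp only [Fintype.card_coe, finrank_fin_fun] at this
    omega
  obtain ⟨N₀, N₁, p₀, p₁, μ₀, μ₁, hp₀, hp₁, hsum₀, hsum₁, hμ₀, hμ₁, hinj₀, hinj₁, hdisj, hμ,
    hN⟩ := exists_disjoint_pos_convex_combinations_of_not_affineIndependent hdep
  refine ⟨∑ i, p₀ i • μ₀ i, hconv.sum_mem (fun i _ => (hp₀ i).le) hsum₀
      (fun i _ => extremePoints_subset (hext (hμ₀ i))), N₀, N₁, p₀, p₁, μ₀, μ₁, hp₀, hp₁,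
    hsum₀, hsum₁, fun i => hext (hμ₀ i), fun j => hext (hμ₁ j), hinj₀, hinj₁, hdisj, rfl,
    hμ.symm, hcard ▸ hN⟩
end
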